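/- arXiv:2511.09500 — 2 statements merged into one kernel-verified Lean document; each statement's English description precedes it below -/
import Mathlib

section
/- First-order expansion of the derivatives of the noisy density: Assume p satisfies the smoothness assumption S(4), and Z has a density φ, is symmetric about 0, and satisfies the moment assumption N(i). For η ∈ (0,1) let q_η(y) = ∫_{ℝ^d} p(y − √(2η)·z) φ(z) dz. Then there exists a constant C > 0 such that for all η ∈ (0,1): sup_{y∈ℝ^d} ‖∇q_η(y) − ∇p(y)‖ ≤ C·η and sup_{y∈ℝ^d} |Δq_η(y) − Δp(y)| ≤ C·η. -/
/-!
Differentiation under the integral sign turns every partial derivative `∂^α q_η`, `|α| ≤ 2`,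
into the noise average of `∂^α p`. Because `Z` is symmetric, the error of that average is the
average of half the second difference `g (y + εz) + g (y - εz) - 2 g y` of `g = ∂^α p`, which is
`O(ε² ‖z‖²)` once `∇g` is Lipschitz, i.e. once the third and fourth derivatives of `p` are
bounded. With `ε² = 2η` and a finite second moment of `Z` this is `O(η)`.
-/

open MeasureTheory Real

noncomputable section

/-- Partial derivative of `h` in coordinate `i`. -/
def pd {d : ℕ} (i : Fin d) (h : (Fin d → ℝ) → ℝ) (y : Fin d → ℝ) : ℝ :=
  fderiv ℝ h y (Pi.single i 1)

/-- Iterated partial derivative along a list of coordinate indices. -/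
def pdl {d : ℕ} (l : List (Fin d)) (h : (Fin d → ℝ) → ℝ) : (Fin d → ℝ) → ℝ :=
  l.foldr (fun i acc => pd i acc) h

/-- Gradient vector. -/
def grad {d : ℕ} (h : (Fin d → ℝ) → ℝ) (y : Fin d → ℝ) : Fin d → ℝ :=
  fun i => pd i h y

/-- Hessian matrix. -/
def hess {d : ℕ} (h : (Fin d → ℝ) → ℝ) (y : Fin d → ℝ) : Matrix (Fin d) (Fin d) ℝ :=
  Matrix.of fun i j => pd i (pd j h) y

/-- Laplacian. -/
def lap {d : ℕ} (h : (Fin d → ℝ) → ℝ) (y : Fin d → ℝ) : ℝ :=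
  ∑ i, pd i (pd i h) y

/-- Euclidean norm on `Fin d → ℝ`. -/
def eunorm {d : ℕ} (v : Fin d → ℝ) : ℝ :=
  Real.sqrt (∑ i, v i ^ 2)

/-- Frobenius norm of a matrix. -/
def fnorm {d : ℕ} (A : Matrix (Fin d) (Fin d) ℝ) : ℝ :=
  Real.sqrt (∑ i, ∑ j, A i j ^ 2)

/-- Sup (ℓ∞) norm on `Fin d → ℝ`. -/
def supnorm {d : ℕ} (v : Fin d → ℝ) : ℝ :=
  ⨆ i, |v i|

/-- Smoothness assumption `S(k)`: `p` is `C^k` and all of its iterated partial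
derivatives of order at most `k` are uniformly bounded. -/
def SmoothS {d : ℕ} (k : ℕ) (p : (Fin d → ℝ) → ℝ) : Prop :=
  ContDiff ℝ k p ∧
    ∀ l : List (Fin d), l.length ≤ k → ∃ M : ℝ, ∀ x, |pdl l p x| ≤ M

/-- The class `M²(ℝ^d)` of 2-smooth test functions. -/
def TestM2 {d : ℕ} (m : (Fin d → ℝ) → ℝ) : Prop :=
  ContDiff ℝ 2 m ∧ (∃ M : ℝ, ∀ y i j, |pd i (pd j m) y| ≤ M) ∧
    Integrable m ∧ Integrable (fun y => supnorm (grad m y))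

/-- The class `M³(ℝ^d)` of 3-smooth test functions. -/
def TestM3 {d : ℕ} (m : (Fin d → ℝ) → ℝ) : Prop :=
  ContDiff ℝ 3 m ∧ (∃ M : ℝ, ∀ y i j k, |pd i (pd j (pd k m)) y| ≤ M) ∧
    Integrable m ∧ Integrable (fun y => supnorm (grad m y))

section SecondDifference

variable {E : Type*} [NormedAddCommGroup E] [NormedSpace ℝ E]

theorem abs_sub_sub_fderiv_le {g : E → ℝ} (hg : Differentiable ℝ g) {B : ℝ} (hB : 0 ≤ B)
    (hlip : ∀ a b, ‖fderiv ℝ g a - fderiv ℝ g b‖ ≤ B * ‖a - b‖) (y w : E) :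
    |g (y + w) - g y - fderiv ℝ g y w| ≤ B * ‖w‖ ^ 2 := by
  have hball : ∀ x ∈ Metric.closedBall y ‖w‖, ‖fderiv ℝ g x - fderiv ℝ g y‖ ≤ B * ‖w‖ :=
    fun x hx => (hlip x y).trans (mul_le_mul_of_nonneg_left (mem_closedBall_iff_norm.mp hx) hB)
  have h := (convex_closedBall y ‖w‖).norm_image_sub_le_of_norm_fderiv_le'
    (fun x _ => hg.differentiableAt) hball (Metric.mem_closedBall_self (norm_nonneg w))
    (by simp : y + w ∈ Metric.closedBall y ‖w‖)
  rw [add_sub_cancel_left] at h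
  rw [← Real.norm_eq_abs]
  calc _ ≤ B * ‖w‖ * ‖w‖ := h
    _ = B * ‖w‖ ^ 2 := by ring

theorem abs_add_add_sub_two_mul_le {g : E → ℝ} (hg : Differentiable ℝ g) {B : ℝ} (hB : 0 ≤ B)
    (hlip : ∀ a b, ‖fderiv ℝ g a - fderiv ℝ g b‖ ≤ B * ‖a - b‖) (y v : E) :
    |g (y + v) + g (y - v) - 2 * g y| ≤ 2 * B * ‖v‖ ^ 2 := by
  have hplus := abs_sub_sub_fderiv_le hg hB hlip y v
  have hminus := abs_sub_sub_fderiv_le hg hB hlip y (-v)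
  rw [← sub_eq_add_neg, map_neg, norm_neg] at hminus
  calc |g (y + v) + g (y - v) - 2 * g y|
      = |(g (y + v) - g y - fderiv ℝ g y v) + (g (y - v) - g y - -fderiv ℝ g y v)| := by
        ring_nf
    _ ≤ B * ‖v‖ ^ 2 + B * ‖v‖ ^ 2 := (abs_add_le _ _).trans (add_le_add hplus hminus)
    _ = 2 * B * ‖v‖ ^ 2 := by ring

end SecondDifference

section Noisy

variable {E : Type*} [NormedAddCommGroup E] [NormedSpace ℝ E] [MeasurableSpace E] [BorelSpace E]
  {μ : Measure E} {φ : E → ℝ}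

/-- The paper's `q_η` is `noisy volume φ (√(2 * η)) p`. -/
def noisy (μ : Measure E) (φ : E → ℝ) (ε : ℝ) (g : E → ℝ) (y : E) : ℝ :=
  ∫ z, g (y - ε • z) * φ z ∂μ

theorem integrable_comp_sub_smul_mul {g : E → ℝ} (hg : Continuous g) {M : ℝ}
    (hgM : ∀ x, |g x| ≤ M) (hφ : Integrable φ μ) (ε : ℝ) (y : E) :
    Integrable (fun z => g (y - ε • z) * φ z) μ :=
  hφ.bdd_mul (hg.comp (by fun_prop)).aestronglyMeasurable
    (.of_forall fun z => (Real.norm_eq_abs _).trans_le (hgM _))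

theorem hasFDerivAt_noisy [SecondCountableTopology E] {g : E → ℝ} (hg : ContDiff ℝ 1 g)
    {M M' : ℝ} (hgM : ∀ x, |g x| ≤ M) (hg'M : ∀ x, ‖fderiv ℝ g x‖ ≤ M') (hφ0 : ∀ z, 0 ≤ φ z)
    (hφ : Integrable φ μ) (ε : ℝ) (y : E) :
    HasFDerivAt (noisy μ φ ε g) (∫ z, φ z • fderiv ℝ g (y - ε • z) ∂μ) y := by
  have hderiv : ∀ z x, HasFDerivAt (fun x' => g (x' - ε • z) * φ z)
      (φ z • fderiv ℝ g (x - ε • z)) x := fun z x => by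
    have hcomp := (hg.differentiable one_ne_zero (x - ε • z)).hasFDerivAt.comp x
      ((hasFDerivAt_id x).sub_const (ε • z))
    rw [ContinuousLinearMap.comp_id] at hcomp
    exact hcomp.mul_const (φ z)
  have hbound : ∀ x z, ‖φ z • fderiv ℝ g (x - ε • z)‖ ≤ M' * φ z := fun x z => by
    rw [norm_smul, Real.norm_eq_abs, abs_of_nonneg (hφ0 z), mul_comm]
    exact mul_le_mul_of_nonneg_right (hg'M _) (hφ0 z)
  exact hasFDerivAt_integral_of_dominated_of_fderiv_le (Metric.ball_mem_nhds y one_pos)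
    (.of_forall fun x => (integrable_comp_sub_smul_mul hg.continuous hgM hφ ε x).1)
    (integrable_comp_sub_smul_mul hg.continuous hgM hφ ε y)
    (hφ.aestronglyMeasurable.smul
      ((hg.continuous_fderiv one_ne_zero).comp (by fun_prop)).aestronglyMeasurable)
    (.of_forall fun z x _ => hbound x z) (hφ.const_mul M')
    (.of_forall fun z x _ => hderiv z x)

theorem fderiv_noisy_apply [SecondCountableTopology E] {g : E → ℝ} (hg : ContDiff ℝ 1 g)
    {M M' : ℝ} (hgM : ∀ x, |g x| ≤ M) (hg'M : ∀ x, ‖fderiv ℝ g x‖ ≤ M') (hφ0 : ∀ z, 0 ≤ φ z)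
    (hφ : Integrable φ μ) (ε : ℝ) (y v : E) :
    fderiv ℝ (noisy μ φ ε g) y v = noisy μ φ ε (fun x => fderiv ℝ g x v) y := by
  have hint : Integrable (fun z => φ z • fderiv ℝ g (y - ε • z)) μ :=
    hφ.smul_bdd M' ((hg.continuous_fderiv one_ne_zero).comp (by fun_prop)).aestronglyMeasurable
      (.of_forall fun z => hg'M _)
  rw [(hasFDerivAt_noisy hg hgM hg'M hφ0 hφ ε y).fderiv, ContinuousLinearMap.integral_apply hint]
  simp only [noisy, smul_apply, smul_eq_mul, mul_comm]

theorem noisy_sub_eq_integral [μ.IsNegInvariant] {g : E → ℝ} (hg : Continuous g) {M : ℝ}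
    (hgM : ∀ x, |g x| ≤ M) (hφ : Integrable φ μ) (hφ1 : ∫ z, φ z ∂μ = 1)
    (hφsym : ∀ z, φ (-z) = φ z) (ε : ℝ) (y : E) :
    noisy μ φ ε g y - g y = ∫ z, (g (y + ε • z) + g (y - ε • z) - 2 * g y) / 2 * φ z ∂μ := by
  have hint := integrable_comp_sub_smul_mul hg hgM hφ
  have hreflect : ∫ z, g (y + ε • z) * φ z ∂μ = noisy μ φ ε g y := by
    rw [noisy, ← integral_neg_eq_self]
    simp only [smul_neg, ← sub_eq_add_neg, hφsym]
  have hplus : Integrable (fun z => g (y + ε • z) * φ z) μ := by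
    simpa only [neg_smul, sub_neg_eq_add] using hint (-ε) y
  calc noisy μ φ ε g y - g y
      = ((∫ z, g (y + ε • z) * φ z ∂μ) + ∫ z, g (y - ε • z) * φ z ∂μ) / 2
          - g y * ∫ z, φ z ∂μ := by rw [hreflect, hφ1, noisy]; ring
    _ = _ := by
      rw [← integral_add hplus (hint ε y), ← integral_div, ← integral_const_mul,
        ← integral_sub (by exact (hplus.add (hint ε y)).div_const 2) (hφ.const_mul _)]
      congr 1
      ext z
      ring

theorem abs_noisy_sub_le [μ.IsNegInvariant] {g : E → ℝ} (hg : Differentiable ℝ g) {M B : ℝ}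
    (hB : 0 ≤ B) (hgM : ∀ x, |g x| ≤ M)
    (hlip : ∀ a b, ‖fderiv ℝ g a - fderiv ℝ g b‖ ≤ B * ‖a - b‖)
    (hφ0 : ∀ z, 0 ≤ φ z) (hφ : Integrable φ μ) (hφ1 : ∫ z, φ z ∂μ = 1)
    (hφsym : ∀ z, φ (-z) = φ z) (hφ2 : Integrable (fun z => ‖z‖ ^ 2 * φ z) μ) (ε : ℝ) (y : E) :
    |noisy μ φ ε g y - g y| ≤ B * ε ^ 2 * ∫ z, ‖z‖ ^ 2 * φ z ∂μ := by
  rw [noisy_sub_eq_integral hg.continuous hgM hφ hφ1 hφsym, ← integral_const_mul,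
    ← Real.norm_eq_abs]
  refine norm_integral_le_of_norm_le (hφ2.const_mul _) (.of_forall fun z => ?_)
  have h := abs_add_add_sub_two_mul_le hg hB hlip y (ε • z)
  rw [norm_smul, mul_pow, Real.norm_eq_abs, sq_abs] at h
  rw [Real.norm_eq_abs, abs_mul, abs_div, abs_two, abs_of_nonneg (hφ0 z)]
  calc _ ≤ 2 * B * (ε ^ 2 * ‖z‖ ^ 2) / 2 * φ z := by gcongr; exact hφ0 z
    _ = _ := by ring

end Noisy

section Coordinates

variable {d : ℕ}

theorem norm_le_sum_norm_apply_single {F : Type*} [NormedAddCommGroup F] [NormedSpace ℝ F]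
    (L : (Fin d → ℝ) →L[ℝ] F) : ‖L‖ ≤ ∑ i, ‖L (Pi.single i 1)‖ := by
  refine L.opNorm_le_bound (Finset.sum_nonneg fun i _ => norm_nonneg _) fun v => ?_
  have hv : v = ∑ i, v i • (Pi.single i 1 : Fin d → ℝ) := by
    ext j
    simp [Finset.sum_apply, Pi.single_apply]
  calc ‖L v‖ = ‖∑ i, v i • L (Pi.single i 1)‖ := by
        conv_lhs => rw [hv, map_sum]
        simp only [map_smul]
    _ ≤ ∑ i, ‖L (Pi.single i 1)‖ * ‖v‖ := by
        refine (norm_sum_le _ _).trans (Finset.sum_le_sum fun i _ => ?_)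
        rw [norm_smul, mul_comm]
        exact mul_le_mul_of_nonneg_left (norm_le_pi_norm v i) (norm_nonneg _)
    _ = (∑ i, ‖L (Pi.single i 1)‖) * ‖v‖ := (Finset.sum_mul _ _ _).symm

theorem norm_fderiv_le_of_abs_pd_le {g : (Fin d → ℝ) → ℝ} {M : ℝ} {x : Fin d → ℝ}
    (h : ∀ i, |pd i g x| ≤ M) : ‖fderiv ℝ g x‖ ≤ d * M :=
  calc ‖fderiv ℝ g x‖ ≤ ∑ i, |pd i g x| := norm_le_sum_norm_apply_single _
    _ ≤ ∑ _i : Fin d, M := Finset.sum_le_sum fun i _ => h i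
    _ = d * M := by simp

theorem norm_fderiv_sub_fderiv_le {g : (Fin d → ℝ) → ℝ} {M : ℝ}
    (hg : ∀ j, Differentiable ℝ (pd j g)) (h : ∀ i j x, |pd i (pd j g) x| ≤ M) (a b : Fin d → ℝ) :
    ‖fderiv ℝ g a - fderiv ℝ g b‖ ≤ d * (d * M) * ‖a - b‖ :=
  calc ‖fderiv ℝ g a - fderiv ℝ g b‖ ≤ ∑ j, ‖pd j g a - pd j g b‖ :=
        norm_le_sum_norm_apply_single _
    _ ≤ ∑ _j : Fin d, d * M * ‖a - b‖ := Finset.sum_le_sum fun j _ =>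
        convex_univ.norm_image_sub_le_of_norm_fderiv_le (fun x _ => (hg j).differentiableAt)
          (fun x _ => norm_fderiv_le_of_abs_pd_le fun i => h i j x) trivial trivial
    _ = d * (d * M) * ‖a - b‖ := by simp [mul_assoc]

theorem contDiff_pd {n : ℕ} {g : (Fin d → ℝ) → ℝ} (hg : ContDiff ℝ (n + 1) g) (i : Fin d) :
    ContDiff ℝ n (pd i g) :=
  (hg.fderiv_right le_rfl).clm_apply contDiff_const

theorem pdl_pdl (l m : List (Fin d)) (g : (Fin d → ℝ) → ℝ) : pdl l (pdl m g) = pdl (l ++ m) g :=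
  (List.foldr_append ..).symm

theorem contDiff_pdl {k n : ℕ} {g : (Fin d → ℝ) → ℝ} (hg : ContDiff ℝ k g) {l : List (Fin d)}
    (hl : n + l.length ≤ k) : ContDiff ℝ n (pdl l g) := by
  induction l generalizing n with
  | nil => exact hg.of_le (by exact_mod_cast hl)
  | cons i l ih =>
    exact contDiff_pd (ih (n := n + 1) (by simp only [List.length_cons] at hl; omega)) i

def PdlBounded (n : ℕ) (M : ℝ) (g : (Fin d → ℝ) → ℝ) : Prop :=
  ∀ l : List (Fin d), l.length ≤ n → ∀ x, |pdl l g x| ≤ M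

theorem SmoothS.exists_pdlBounded {k : ℕ} {p : (Fin d → ℝ) → ℝ} (h : SmoothS k p) :
    ∃ M, PdlBounded k M p := by
  choose! c hc using h.2
  have : Finite {l : List (Fin d) // l.length ≤ k} := (List.finite_length_le _ k).to_subtype
  obtain ⟨M, hM⟩ := Finite.exists_le fun l : {l : List (Fin d) // l.length ≤ k} => c l
  exact ⟨M, fun l hl x => (hc l hl x).trans (hM ⟨l, hl⟩)⟩

theorem PdlBounded.pdl {k n : ℕ} {M : ℝ} {g : (Fin d → ℝ) → ℝ} (h : PdlBounded k M g)
    {m : List (Fin d)} (hm : n + m.length ≤ k) : PdlBounded n M (pdl m g) := fun l hl x => by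
  rw [pdl_pdl]
  exact h _ (by rw [List.length_append]; omega) x

end Coordinates

section NoisyCoordinates

variable {d : ℕ} {μ : Measure (Fin d → ℝ)} {φ : (Fin d → ℝ) → ℝ}

theorem pd_noisy {g : (Fin d → ℝ) → ℝ} (hg : ContDiff ℝ 1 g) {M : ℝ} (hb : PdlBounded 1 M g)
    (hφ0 : ∀ z, 0 ≤ φ z) (hφ : Integrable φ μ) (ε : ℝ) (i : Fin d) :
    pd i (noisy μ φ ε g) = noisy μ φ ε (pd i g) :=
  funext fun y => fderiv_noisy_apply hg (fun x => hb [] (Nat.zero_le _) x)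
    (fun x => norm_fderiv_le_of_abs_pd_le fun j => hb [j] le_rfl x) hφ0 hφ ε y _

theorem pdl_noisy {k : ℕ} {g : (Fin d → ℝ) → ℝ} (hg : ContDiff ℝ k g) {M : ℝ}
    (hb : PdlBounded k M g) (hφ0 : ∀ z, 0 ≤ φ z) (hφ : Integrable φ μ) (ε : ℝ)
    {l : List (Fin d)} (hl : l.length ≤ k) :
    pdl l (noisy μ φ ε g) = noisy μ φ ε (pdl l g) := by
  induction l with
  | nil => rfl
  | cons i l ih =>
    rw [List.length_cons] at hl
    change pd i (pdl l (noisy μ φ ε g)) = noisy μ φ ε (pd i (pdl l g))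
    rw [ih (by omega)]
    exact pd_noisy (contDiff_pdl hg (by omega)) (hb.pdl (by omega)) hφ0 hφ ε i

theorem abs_noisy_sub_le_of_pdlBounded [μ.IsNegInvariant] {g : (Fin d → ℝ) → ℝ}
    (hg : ContDiff ℝ 2 g) {M : ℝ} (hb : PdlBounded 2 M g) (hφ0 : ∀ z, 0 ≤ φ z)
    (hφ : Integrable φ μ) (hφ1 : ∫ z, φ z ∂μ = 1) (hφsym : ∀ z, φ (-z) = φ z)
    (hφ2 : Integrable (fun z => ‖z‖ ^ 2 * φ z) μ) (ε : ℝ) (y : Fin d → ℝ) :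
    |noisy μ φ ε g y - g y| ≤ d * (d * M) * ε ^ 2 * ∫ z, ‖z‖ ^ 2 * φ z ∂μ := by
  have hM : 0 ≤ M := (abs_nonneg _).trans (hb [] (Nat.zero_le _) 0)
  refine abs_noisy_sub_le (hg.differentiable two_ne_zero) (by positivity)
    (fun x => hb [] (Nat.zero_le _) x) ?_ hφ0 hφ hφ1 hφsym hφ2 ε y
  exact norm_fderiv_sub_fderiv_le
    (fun j => (contDiff_pdl (n := 1) (l := [j]) hg le_rfl).differentiable one_ne_zero)
    (fun i j x => hb [i, j] le_rfl x)

end NoisyCoordinates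

theorem sq_norm_le_sum_sq {d : ℕ} (z : Fin d → ℝ) : ‖z‖ ^ 2 ≤ ∑ i, z i ^ 2 := by
  refine (Real.le_sqrt (norm_nonneg z) (by positivity)).1 ?_
  refine (pi_norm_le_iff_of_nonneg (Real.sqrt_nonneg _)).2 fun i => ?_
  exact Real.abs_le_sqrt (Finset.single_le_sum (f := fun i => z i ^ 2)
    (fun i _ => sq_nonneg _) (Finset.mem_univ i))

theorem integrable_sq_norm_mul {d : ℕ} {μ : Measure (Fin d → ℝ)} {φ : (Fin d → ℝ) → ℝ}
    (hφ0 : ∀ z, 0 ≤ φ z) (hφ : Integrable φ μ)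
    (hmom : ∀ i, Integrable (fun z => z i * z i * φ z) μ) :
    Integrable (fun z => ‖z‖ ^ 2 * φ z) μ := by
  refine (integrable_finsetSum Finset.univ fun i _ => hmom i).mono'
    ((continuous_norm.pow 2).aestronglyMeasurable.mul hφ.aestronglyMeasurable)
    (.of_forall fun z => ?_)
  rw [Real.norm_eq_abs, abs_of_nonneg (mul_nonneg (sq_nonneg _) (hφ0 z))]
  simp_rw [← sq, ← Finset.sum_mul]
  exact mul_le_mul_of_nonneg_right (sq_norm_le_sum_sq z) (hφ0 z)

theorem eunorm_le_sum_abs {d : ℕ} (v : Fin d → ℝ) : eunorm v ≤ ∑ i, |v i| := by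
  refine (Real.sqrt_le_left (by positivity)).2 ?_
  simp_rw [← sq_abs (v _)]
  exact Finset.sum_sq_le_sq_sum_of_nonneg fun i _ => abs_nonneg _

theorem convolution_expansion_derivatives_first_order_general
    {d : ℕ}
    (p φ : (Fin d → ℝ) → ℝ)
    (hφ0 : ∀ z, 0 ≤ φ z) (hφ1 : (∫ z, φ z) = 1)
    (hφsym : ∀ z, φ (-z) = φ z)
    (hS : SmoothS 4 p)
    (hmom2 : ∀ i j, (∫ z, z i * z j * φ z) = if i = j then (1 : ℝ) else 0)
 :
    ∃ C > (0 : ℝ), ∀ η ∈ Set.Ioo (0 : ℝ) 1, ∀ y : Fin d → ℝ,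
      eunorm (grad (fun y' => ∫ z, p (y' - Real.sqrt (2 * η) • z) * φ z) y -
          grad p y) ≤ C * η ∧
      |lap (fun y' => ∫ z, p (y' - Real.sqrt (2 * η) • z) * φ z) y - lap p y| ≤
        C * η := by
  obtain ⟨M, hM⟩ := hS.exists_pdlBounded
  have hM0 : 0 ≤ M := (abs_nonneg _).trans (hM [] (Nat.zero_le _) 0)
  -- a nonzero Bochner integral forces integrability
  have hφ : Integrable φ := .of_integral_ne_zero (by simp [hφ1])
  have hφ2 : Integrable fun z : Fin d → ℝ => ‖z‖ ^ 2 * φ z :=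
    integrable_sq_norm_mul hφ0 hφ fun i => .of_integral_ne_zero (by simp [hmom2])
  set K := ∫ z : Fin d → ℝ, ‖z‖ ^ 2 * φ z
  have hK : 0 ≤ K := integral_nonneg fun z => mul_nonneg (sq_nonneg _) (hφ0 z)
  set c := d * (d * M) * 2 * K
  refine ⟨d * c + 1, by positivity, fun η hη y => ?_⟩
  set q := noisy volume φ (√(2 * η)) p
  have hcoord : ∀ m : List (Fin d), m.length ≤ 2 → |pdl m q y - pdl m p y| ≤ c * η := by
    intro m hm
    rw [pdl_noisy hS.1 hM hφ0 hφ _ (show m.length ≤ 4 by omega)]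
    calc _ ≤ d * (d * M) * √(2 * η) ^ 2 * K :=
          abs_noisy_sub_le_of_pdlBounded (contDiff_pdl (n := 2) hS.1 (by omega)) (hM.pdl (by omega))
            hφ0 hφ hφ1 hφsym hφ2 _ y
      _ = c * η := by rw [Real.sq_sqrt (by linarith [hη.1])]; ring
  have hsum : ∀ m : Fin d → List (Fin d), (∀ i, (m i).length ≤ 2) →
      ∑ i, |pdl (m i) q y - pdl (m i) p y| ≤ (d * c + 1) * η := by
    intro m hm
    calc _ ≤ ∑ _i : Fin d, c * η := Finset.sum_le_sum fun i _ => hcoord (m i) (hm i)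
      _ = d * c * η := by simp [mul_assoc]
      _ ≤ (d * c + 1) * η := by linarith [hη.1]
  refine ⟨(eunorm_le_sum_abs _).trans (hsum (fun i => [i]) fun _ => by simp), ?_⟩
  rw [lap, lap, ← Finset.sum_sub_distrib]
  exact (Finset.abs_sum_le_sum_abs _ _).trans (hsum (fun i => [i, i]) fun _ => by simp)

/-- First-order expansion of the derivatives of the noisy density
`q_η(y) = ∫ p(y - √(2η) z) φ(z) dz`:
`sup_y ‖∇q_η(y) - ∇p(y)‖ ≤ C η` and `sup_y |Δq_η(y) - Δp(y)| ≤ C η`. -/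
theorem convolution_expansion_derivatives_first_order
    {d : ℕ} (hd : 0 < d)
    (p φ : (Fin d → ℝ) → ℝ)
    (hp0 : ∀ x, 0 ≤ p x) (hp1 : (∫ x, p x) = 1)
    (hφ0 : ∀ z, 0 ≤ φ z) (hφ1 : (∫ z, φ z) = 1)
    (hφsym : ∀ z, φ (-z) = φ z)
    (hS : SmoothS 4 p)
    (hmom2 : ∀ i j, (∫ z, z i * z j * φ z) = if i = j then (1 : ℝ) else 0)
    (hmom4 : ∀ i, Integrable fun z => |z i| ^ 4 * φ z)
 :
    ∃ C > (0 : ℝ), ∀ η ∈ Set.Ioo (0 : ℝ) 1, ∀ y : Fin d → ℝ,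
      eunorm (grad (fun y' => ∫ z, p (y' - Real.sqrt (2 * η) • z) * φ z) y -
          grad p y) ≤ C * η ∧
      |lap (fun y' => ∫ z, p (y' - Real.sqrt (2 * η) • z) * φ z) y - lap p y| ≤
        C * η :=
  convolution_expansion_derivatives_first_order_general p φ hφ0 hφ1 hφsym hS hmom2
end
end

section
/- Higher-order expansion of the derivatives of the noisy density: Assume p satisfies the smoothness assumption S(6), and Z has a density φ, is symmetric about 0, and satisfies the moment assumptions N(i) and N(ii). For η ∈ (0,1) let q_η(y) = ∫_{ℝ^d} p(y − √(2η)·z) φ(z) dz. Then there exists a constant C > 0 such that for all η ∈ (0,1): sup_{y∈ℝ^d} ‖∇q_η(y) − ∇p(y) − η·∇Δp(y)‖ ≤ C·η², sup_{y∈ℝ^d} |Δq_η(y) − Δp(y) − η·Δ²p(y)| ≤ C·η², and sup_{y∈ℝ^d} ‖∇Δq_η(y) − ∇Δp(y)‖ ≤ C·η. -/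
open MeasureTheory Real

noncomputable section

/-!
Differentiation commutes with the noisy average `E[g (y - c Z)]`, since all derivatives involved
are bounded, so each of the three quantities is a sum of terms `E[h (y - c Z)] - h y - η Δh y`
or `E[h (y - c Z)] - h y` with `h` a derivative of `p`. By the symmetry of `Z`,
`2 E[h (y - c Z)] = E[h (y + c Z) + h (y - c Z)]`, and in the Taylor expansion of this even part
the odd-order terms cancel. With `c = √(2η)`, the second-order term integrates to
`c² Δh y = 2η Δh y` because `E[Z_i Z_j] = δ_ij`, and the remainder is
`O(c⁴ E[‖Z‖₁⁴]) = O(η²)`, or `O(c² E[‖Z‖₁²]) = O(η)` for the expansion stopped at order zero.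
-/

/-- The sum is the Taylor polynomial of `f 0` at `s`, evaluated at `1`; its derivative in `s`
telescopes to the top-order term. -/
theorem hasDerivAt_taylorSum (f : ℕ → ℝ → ℝ) (n : ℕ)
    (hf : ∀ k ≤ n, ∀ t, HasDerivAt (f k) (f (k + 1) t) t) (t : ℝ) :
    HasDerivAt (fun s => ∑ k ∈ Finset.range (n + 1), (1 - s) ^ k / k.factorial * f k s)
      ((1 - t) ^ n / n.factorial * f (n + 1) t) t := by
  induction n with
  | zero => simpa using hf 0 le_rfl t
  | succ n ih =>
    have hline : HasDerivAt (fun s : ℝ => (1 - s) ^ (n + 1) / (n + 1).factorial)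
        ((n + 1 : ℕ) * (1 - t) ^ n * (-1) / (n + 1).factorial) t :=
      (((hasDerivAt_id t).const_sub 1).pow (n + 1)).div_const _
    have hsum := (ih fun k hk => hf k (hk.trans n.le_succ)).add
      (hline.mul (hf (n + 1) le_rfl t))
    refine (hsum.congr_deriv ?_).congr_of_eventuallyEq
      (Filter.Eventually.of_forall fun s => Finset.sum_range_succ _ (n + 1))
    rw [Nat.factorial_succ]
    push_cast
    field_simp
    ring

theorem abs_sub_taylorSum_le (f : ℕ → ℝ → ℝ) (n : ℕ)
    (hf : ∀ k ≤ n, ∀ t, HasDerivAt (f k) (f (k + 1) t) t) {K : ℝ}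
    (hK : ∀ t ∈ Set.Icc (0 : ℝ) 1, |f (n + 1) t| ≤ K) :
    |f 0 1 - ∑ k ∈ Finset.range (n + 1), f k 0 / k.factorial| ≤ K / n.factorial := by
  have hmvt := norm_image_sub_le_of_norm_deriv_le_segment' (a := 0) (b := 1) (C := K / n.factorial)
    (fun t _ => (hasDerivAt_taylorSum f n hf t).hasDerivWithinAt) (fun t ht => ?_) 1
    (by simp)
  · simpa [Finset.sum_range_succ', Real.norm_eq_abs, div_eq_inv_mul] using hmvt
  · have h0 : 0 ≤ 1 - t := by linarith [ht.2]
    have h1 : (1 - t) ^ n ≤ 1 := pow_le_one₀ h0 (by linarith [ht.1])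
    rw [Real.norm_eq_abs, abs_mul, abs_div, abs_of_nonneg (pow_nonneg h0 n),
      abs_of_pos (by positivity : (0 : ℝ) < n.factorial), div_mul_eq_mul_div]
    gcongr
    calc (1 - t) ^ n * |f (n + 1) t| ≤ 1 * K :=
          mul_le_mul h1 (hK t (Set.Ico_subset_Icc_self ht)) (abs_nonneg _) zero_le_one
      _ = K := one_mul K

section PartialDerivatives

variable {d : ℕ}

theorem pdl_append_singleton (l : List (Fin d)) (i : Fin d) (g : (Fin d → ℝ) → ℝ) :
    pdl (l ++ [i]) g = pdl l (pd i g) := by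
  simp [pdl, List.foldr_append]

theorem ContDiff.pd {n : ℕ} {g : (Fin d → ℝ) → ℝ} (hg : ContDiff ℝ (n + 1 : ℕ) g) (i : Fin d) :
    ContDiff ℝ n (pd i g) :=
  (hg.fderiv_right (by exact_mod_cast le_rfl)).clm_apply contDiff_const

theorem ContinuousLinearMap.apply_eq_sum_mul_single (L : (Fin d → ℝ) →L[ℝ] ℝ) (v : Fin d → ℝ) :
    L v = ∑ i, v i * L (Pi.single i 1) := by
  conv_lhs => rw [← Finset.univ_sum_single v]
  refine (map_sum L _ _).trans (Finset.sum_congr rfl fun i _ => ?_)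
  rw [← smul_eq_mul, ← L.map_smul, ← Pi.single_smul']
  simp

theorem pd_comm {g : (Fin d → ℝ) → ℝ} (hg : ContDiff ℝ 2 g) (i j : Fin d) :
    pd i (pd j g) = pd j (pd i g) := by
  funext y
  have hd : DifferentiableAt ℝ (fderiv ℝ g) y :=
    (hg.fderiv_right (m := 1) (by norm_num)).differentiable (by norm_num) y
  have hsecond : ∀ a b : Fin d,
      pd a (pd b g) y = fderiv ℝ (fderiv ℝ g) y (Pi.single a 1) (Pi.single b 1) := by
    intro a b
    unfold pd
    rw [fderiv_clm_apply hd (differentiableAt_const _)]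
    simp
  rw [hsecond, hsecond]
  exact hg.contDiffAt.isSymmSndFDerivAt (by simp) _ _

theorem pd_fun_sum {ι : Type*} (s : Finset ι) (f : ι → (Fin d → ℝ) → ℝ) {y : Fin d → ℝ}
    (hf : ∀ j ∈ s, DifferentiableAt ℝ (f j) y) (i : Fin d) :
    pd i (fun x => ∑ j ∈ s, f j x) y = ∑ j ∈ s, pd i (f j) y := by
  simp [pd, fderiv_fun_sum hf]

end PartialDerivatives

section Laplacian

variable {d : ℕ}

theorem lap_fun_sum {ι : Type*} (s : Finset ι) {f : ι → (Fin d → ℝ) → ℝ}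
    (hf : ∀ j ∈ s, ContDiff ℝ 2 (f j)) (y : Fin d → ℝ) :
    lap (fun x => ∑ j ∈ s, f j x) y = ∑ j ∈ s, lap (f j) y := by
  have hpd : ∀ i, pd i (fun x => ∑ j ∈ s, f j x) = fun x => ∑ j ∈ s, pd i (f j) x :=
    fun i => funext fun x =>
      pd_fun_sum s f (fun j hj => (hf j hj).differentiable (by norm_num) x) i
  simp only [lap, hpd]
  rw [Finset.sum_comm]
  refine Finset.sum_congr rfl fun i _ => pd_fun_sum s _ (fun j hj => ?_) i
  exact ((hf j hj).pd (n := 1) i).differentiable (by norm_num) y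

theorem pd_lap {g : (Fin d → ℝ) → ℝ} (hg : ContDiff ℝ 3 g) (i : Fin d) :
    pd i (lap g) = lap (pd i g) := by
  funext y
  have hpd2 : ∀ j, ContDiff ℝ 1 (pd j (pd j g)) := fun j => (hg.pd (n := 2) j).pd j
  rw [show lap g = fun x => ∑ j, pd j (pd j g) x from rfl,
    pd_fun_sum _ _ (fun j _ => (hpd2 j).differentiable one_ne_zero y)]
  refine Finset.sum_congr rfl fun j _ => ?_
  rw [pd_comm ((hg.pd (n := 2) j).of_le (by norm_num)) i j,
    pd_comm (hg.of_le (by norm_num)) i j]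

end Laplacian

section Bounds

variable {d : ℕ}

def PartialsBoundedBy (k : ℕ) (M : ℝ) (g : (Fin d → ℝ) → ℝ) : Prop :=
  ∀ l : List (Fin d), l.length ≤ k → ∀ x, |pdl l g x| ≤ M

variable {k : ℕ} {M : ℝ} {g : (Fin d → ℝ) → ℝ}

theorem PartialsBoundedBy.nonneg (h : PartialsBoundedBy k M g) : 0 ≤ M :=
  (abs_nonneg _).trans (h [] (Nat.zero_le k) 0)

theorem PartialsBoundedBy.abs_le (h : PartialsBoundedBy k M g) (x : Fin d → ℝ) : |g x| ≤ M :=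
  h [] (Nat.zero_le k) x

theorem PartialsBoundedBy.mono {j : ℕ} (h : PartialsBoundedBy k M g) (hjk : j ≤ k) :
    PartialsBoundedBy j M g :=
  fun l hl => h l (hl.trans hjk)

theorem PartialsBoundedBy.pd (h : PartialsBoundedBy (k + 1) M g) (i : Fin d) :
    PartialsBoundedBy k M (pd i g) := fun l hl x => by
  rw [← pdl_append_singleton]
  exact h _ (by simpa using hl) x

theorem SmoothS.exists_partialsBoundedBy (h : SmoothS k g) : ∃ M, PartialsBoundedBy k M g := by
  have : Finite {l : List (Fin d) // l.length ≤ k} := (List.finite_length_le (Fin d) k).to_subtype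
  choose M hM using fun l : {l : List (Fin d) // l.length ≤ k} => h.2 l.1 l.2
  obtain ⟨B, hB⟩ := Finite.exists_le M
  exact ⟨B, fun l hl x => (hM ⟨l, hl⟩ x).trans (hB _)⟩

theorem PartialsBoundedBy.norm_fderiv_le (h : PartialsBoundedBy 1 M g) (x : Fin d → ℝ) :
    ‖fderiv ℝ g x‖ ≤ d * M := by
  refine ContinuousLinearMap.opNorm_le_bound _ (by have := h.nonneg; positivity) fun v => ?_
  rw [ContinuousLinearMap.apply_eq_sum_mul_single]
  calc ‖∑ i, v i * fderiv ℝ g x (Pi.single i 1)‖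
      ≤ ∑ i, ‖v i‖ * ‖fderiv ℝ g x (Pi.single i 1)‖ := by
        simpa only [norm_mul] using
          norm_sum_le Finset.univ fun i => v i * fderiv ℝ g x (Pi.single i 1)
    _ ≤ ∑ _i : Fin d, ‖v‖ * M :=
        Finset.sum_le_sum fun i _ =>
          mul_le_mul (norm_le_pi_norm v i) (h [i] le_rfl x) (abs_nonneg _) (norm_nonneg v)
    _ = d * M * ‖v‖ := by
      simp only [Finset.sum_const, Finset.card_univ, Fintype.card_fin, nsmul_eq_mul]
      ring

theorem PartialsBoundedBy.norm_smul_fderiv_le (h : PartialsBoundedBy 1 M g) (a : ℝ)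
    (x : Fin d → ℝ) : ‖a • fderiv ℝ g x‖ ≤ d * M * ‖a‖ := by
  rw [norm_smul, mul_comm]
  exact mul_le_mul_of_nonneg_right (h.norm_fderiv_le x) (norm_nonneg a)

end Bounds

section DirectionalDerivatives

variable {d : ℕ}

/-- `iterDirDeriv v n g = (v ⬝ ∇)ⁿ g`. -/
def iterDirDeriv (v : Fin d → ℝ) : ℕ → ((Fin d → ℝ) → ℝ) → (Fin d → ℝ) → ℝ
  | 0, g => g
  | n + 1, g => fun x => ∑ i, v i * iterDirDeriv v n (pd i g) x

variable (v : Fin d → ℝ)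

@[simp]
theorem iterDirDeriv_zero (g : (Fin d → ℝ) → ℝ) : iterDirDeriv v 0 g = g := rfl

theorem hasDerivAt_iterDirDeriv_line (n : ℕ) {g : (Fin d → ℝ) → ℝ}
    (hg : ContDiff ℝ (n + 1 : ℕ) g) (y : Fin d → ℝ) (t : ℝ) :
    HasDerivAt (fun s : ℝ => iterDirDeriv v n g (y + s • v))
      (iterDirDeriv v (n + 1) g (y + t • v)) t := by
  induction n generalizing g with
  | zero =>
    have hline : HasDerivAt (fun s : ℝ => y + s • v) v t := by
      simpa using ((hasDerivAt_id t).smul_const v).const_add y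
    have hcomp :=
      ((hg.differentiable (by norm_num)) (y + t • v)).hasFDerivAt.comp_hasDerivAt t hline
    simpa [Function.comp_def, iterDirDeriv, pd, ContinuousLinearMap.apply_eq_sum_mul_single _ v]
      using hcomp
  | succ n ih =>
    simpa [iterDirDeriv] using HasDerivAt.fun_sum fun i _ => (ih (hg.pd i)).const_mul (v i)

theorem abs_iterDirDeriv_le (n : ℕ) {M : ℝ} {g : (Fin d → ℝ) → ℝ}
    (hg : PartialsBoundedBy n M g) (x : Fin d → ℝ) :
    |iterDirDeriv v n g x| ≤ (∑ i, |v i|) ^ n * M := by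
  induction n generalizing g with
  | zero => simpa [iterDirDeriv] using hg.abs_le x
  | succ n ih =>
    calc |∑ i, v i * iterDirDeriv v n (pd i g) x|
        ≤ ∑ i, |v i| * ((∑ j, |v j|) ^ n * M) :=
          (Finset.abs_sum_le_sum_abs _ _).trans <| Finset.sum_le_sum fun i _ => by
            rw [abs_mul]
            exact mul_le_mul_of_nonneg_left (ih (hg.pd i)) (abs_nonneg _)
      _ = (∑ i, |v i|) ^ (n + 1) * M := by rw [← Finset.sum_mul]; ring

theorem iterDirDeriv_neg (n : ℕ) (g : (Fin d → ℝ) → ℝ) (x : Fin d → ℝ) :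
    iterDirDeriv (-v) n g x = (-1) ^ n * iterDirDeriv v n g x := by
  induction n generalizing g with
  | zero => simp [iterDirDeriv]
  | succ n ih =>
    simp only [iterDirDeriv, ih, Finset.mul_sum, Pi.neg_apply]
    exact Finset.sum_congr rfl fun i _ => by ring

theorem iterDirDeriv_two (g : (Fin d → ℝ) → ℝ) (x : Fin d → ℝ) :
    iterDirDeriv v 2 g x = ∑ i, ∑ j, v i * v j * pd j (pd i g) x := by
  simp only [iterDirDeriv, Finset.mul_sum, mul_assoc]

theorem abs_add_sub_sum_iterDirDeriv_le (n : ℕ) {M : ℝ} {g : (Fin d → ℝ) → ℝ}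
    (hg : ContDiff ℝ (n + 1 : ℕ) g) (hM : PartialsBoundedBy (n + 1) M g) (y : Fin d → ℝ) :
    |g (y + v) + g (y - v) -
        ∑ k ∈ Finset.range (n + 1), (1 + (-1) ^ k) * iterDirDeriv v k g y / k.factorial|
      ≤ 2 * (∑ i, |v i|) ^ (n + 1) * M / n.factorial := by
  have hcd : ∀ k ≤ n, ContDiff ℝ (k + 1 : ℕ) g := fun k hk =>
    hg.of_le (by exact_mod_cast Nat.succ_le_succ hk)
  have htaylor := abs_sub_taylorSum_le
    (fun k t => iterDirDeriv v k g (y + t • v) + iterDirDeriv (-v) k g (y + t • -v)) n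
    (fun k hk t => (hasDerivAt_iterDirDeriv_line v k (hcd k hk) y t).add
      (hasDerivAt_iterDirDeriv_line (-v) k (hcd k hk) y t))
    (K := 2 * (∑ i, |v i|) ^ (n + 1) * M) fun t _ => by
      have hneg := abs_iterDirDeriv_le (-v) (n + 1) hM (y + t • -v)
      simp only [Pi.neg_apply, abs_neg] at hneg
      linarith [abs_add_le (iterDirDeriv v (n + 1) g (y + t • v))
        (iterDirDeriv (-v) (n + 1) g (y + t • -v)), abs_iterDirDeriv_le v (n + 1) hM (y + t • v)]
  simpa [iterDirDeriv_neg, iterDirDeriv, ← sub_eq_add_neg, add_mul] using htaylor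

end DirectionalDerivatives

section NoisyAverage

variable {d : ℕ}

/-- `noisyAvg φ c g y = E[g (y - c Z)]` for `Z` with density `φ`, so that
`q_η = noisyAvg φ (√(2η)) p`. -/
def noisyAvg (φ : (Fin d → ℝ) → ℝ) (c : ℝ) (g : (Fin d → ℝ) → ℝ) (y : Fin d → ℝ) : ℝ :=
  ∫ z, g (y - c • z) * φ z

variable {φ g : (Fin d → ℝ) → ℝ} {M : ℝ}

theorem integrable_comp_mul_of_abs_le (hφ : Integrable φ) (hg : Continuous g)
    (hM : ∀ x, |g x| ≤ M) (a : (Fin d → ℝ) → Fin d → ℝ) (ha : Continuous a) :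
    Integrable fun z => g (a z) * φ z :=
  hφ.bdd_mul (hg.comp ha).aestronglyMeasurable (ae_of_all _ fun z => hM (a z))

theorem integrable_smul_fderiv_comp (hφ : Integrable φ) (hg : ContDiff ℝ 1 g)
    (hM : PartialsBoundedBy 1 M g) (c : ℝ) (y : Fin d → ℝ) :
    Integrable fun z => φ z • fderiv ℝ g (y - c • z) :=
  (hφ.norm.const_mul (d * M)).mono'
    (hφ.1.smul ((hg.continuous_fderiv one_ne_zero).comp (by fun_prop)).aestronglyMeasurable)
    (ae_of_all _ fun z => hM.norm_smul_fderiv_le _ _)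

theorem hasFDerivAt_noisyAvg (hφ : Integrable φ) (hg : ContDiff ℝ 1 g)
    (hM : PartialsBoundedBy 1 M g) (c : ℝ) (y : Fin d → ℝ) :
    HasFDerivAt (noisyAvg φ c g) (∫ z, φ z • fderiv ℝ g (y - c • z)) y := by
  refine hasFDerivAt_integral_of_dominated_of_fderiv_le
    (F' := fun x z => φ z • fderiv ℝ g (x - c • z)) (bound := fun z => d * M * ‖φ z‖)
    Filter.univ_mem (Filter.Eventually.of_forall fun x =>
      (integrable_comp_mul_of_abs_le hφ hg.continuous hM.abs_le _ (by fun_prop)).1)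
    (integrable_comp_mul_of_abs_le hφ hg.continuous hM.abs_le _ (by fun_prop))
    (integrable_smul_fderiv_comp hφ hg hM c y).1
    (ae_of_all _ fun z x _ => hM.norm_smul_fderiv_le _ _) (hφ.norm.const_mul _)
    (ae_of_all _ fun z x _ => ?_)
  have hshift : HasFDerivAt (fun x : Fin d → ℝ => x - c • z)
      (ContinuousLinearMap.id ℝ (Fin d → ℝ)) x := (hasFDerivAt_id x).sub_const _
  simpa using (((hg.differentiable one_ne_zero) _).hasFDerivAt.comp x hshift).mul_const (φ z)

theorem pd_noisyAvg (hφ : Integrable φ) (hg : ContDiff ℝ 1 g) (hM : PartialsBoundedBy 1 M g)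
    (c : ℝ) (i : Fin d) : pd i (noisyAvg φ c g) = noisyAvg φ c (pd i g) := by
  funext y
  rw [pd, (hasFDerivAt_noisyAvg hφ hg hM c y).fderiv,
    ContinuousLinearMap.integral_apply (integrable_smul_fderiv_comp hφ hg hM c y)]
  simp [noisyAvg, pd, mul_comm]

end NoisyAverage

section Moments

variable {d : ℕ} {φ : (Fin d → ℝ) → ℝ}

def l1Moment (φ : (Fin d → ℝ) → ℝ) (n : ℕ) : ℝ :=
  ∫ z, (∑ i, |z i|) ^ n * |φ z|

theorem integrable_l1_pow_mul_of_abs_pow (hφ : AEStronglyMeasurable φ) (n : ℕ)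
    (h : ∀ i, Integrable fun z : Fin d → ℝ => |z i| ^ (n + 1) * φ z) :
    Integrable fun z : Fin d → ℝ => (∑ i, |z i|) ^ (n + 1) * φ z := by
  refine ((integrable_finsetSum Finset.univ fun i _ => (h i).norm).const_mul ((d : ℝ) ^ n)).mono'
    ((by fun_prop : Continuous fun z : Fin d → ℝ => (∑ i, |z i|) ^ (n + 1))
      |>.aestronglyMeasurable.mul hφ)
    (ae_of_all _ fun z => ?_)
  have hpow := pow_sum_le_card_mul_sum_pow (s := Finset.univ) (fun i _ => abs_nonneg (z i)) n
  simp only [Finset.card_univ, Fintype.card_fin] at hpow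
  simp only [norm_mul, norm_pow, Real.norm_eq_abs, abs_abs, ← Finset.sum_mul,
    abs_of_nonneg (Finset.sum_nonneg fun i _ => abs_nonneg (z i))]
  rw [← mul_assoc]
  exact mul_le_mul_of_nonneg_right hpow (abs_nonneg _)

theorem integrable_l1_pow_mul_of_le (hφ : Integrable φ) {k n : ℕ}
    (hn : Integrable fun z : Fin d → ℝ => (∑ i, |z i|) ^ n * φ z) (hkn : k ≤ n) :
    Integrable fun z : Fin d → ℝ => (∑ i, |z i|) ^ k * φ z := by
  refine (hφ.norm.add hn.norm).mono'
    ((by fun_prop : Continuous fun z : Fin d → ℝ => (∑ i, |z i|) ^ k).aestronglyMeasurable.mul hφ.1)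
    (ae_of_all _ fun z => ?_)
  have hW : 0 ≤ ∑ i, |z i| := Finset.sum_nonneg fun i _ => abs_nonneg (z i)
  have hpow : (∑ i, |z i|) ^ k ≤ 1 + (∑ i, |z i|) ^ n := by
    rcases le_total (∑ i, |z i|) 1 with h1 | h1
    · linarith [pow_le_one₀ hW h1 (n := k), pow_nonneg hW n]
    · linarith [pow_le_pow_right₀ h1 hkn]
  simp only [Pi.add_apply, norm_mul, norm_pow, Real.norm_eq_abs, abs_of_nonneg hW]
  nlinarith [abs_nonneg (φ z)]

theorem integrable_mul_mul_of_l1_sq (hφ : AEStronglyMeasurable φ)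
    (h2 : Integrable fun z : Fin d → ℝ => (∑ i, |z i|) ^ 2 * φ z) (i j : Fin d) :
    Integrable fun z : Fin d → ℝ => z i * z j * φ z := by
  refine h2.norm.mono' ((by fun_prop : Continuous fun z : Fin d → ℝ => z i * z j)
    |>.aestronglyMeasurable.mul hφ) (ae_of_all _ fun z => ?_)
  have hi := Finset.single_le_sum (fun k _ => abs_nonneg (z k)) (Finset.mem_univ i)
  have hj := Finset.single_le_sum (fun k _ => abs_nonneg (z k)) (Finset.mem_univ j)
  simp only [norm_mul, norm_pow, Real.norm_eq_abs]
  rw [abs_of_nonneg (Finset.sum_nonneg fun k _ => abs_nonneg (z k)), sq]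
  gcongr

theorem abs_integral_mul_le_l1Moment {n : ℕ}
    (hn : Integrable fun z : Fin d → ℝ => (∑ i, |z i|) ^ n * φ z) {R : (Fin d → ℝ) → ℝ} {B : ℝ}
    (hR : ∀ z, |R z| ≤ B * (∑ i, |z i|) ^ n) : |∫ z, R z * φ z| ≤ B * l1Moment φ n := by
  have hnorm : Integrable fun z : Fin d → ℝ => (∑ i, |z i|) ^ n * |φ z| := by
    refine hn.norm.congr (ae_of_all _ fun z => ?_)
    simp [abs_of_nonneg (Finset.sum_nonneg fun k _ => abs_nonneg (z k))]
  rw [← Real.norm_eq_abs, l1Moment, ← integral_const_mul B]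
  refine norm_integral_le_of_norm_le (hnorm.const_mul B) (ae_of_all _ fun z => ?_)
  rw [norm_mul, Real.norm_eq_abs, Real.norm_eq_abs, ← mul_assoc]
  exact mul_le_mul_of_nonneg_right (hR z) (abs_nonneg _)

theorem iterDirDeriv_two_smul_mul (c : ℝ) (g : (Fin d → ℝ) → ℝ) (y : Fin d → ℝ) :
    (fun z => iterDirDeriv (c • z) 2 g y * φ z) =
      fun z => ∑ i, ∑ j, c ^ 2 * pd j (pd i g) y * (z i * z j * φ z) := by
  funext z
  simp only [iterDirDeriv_two, Pi.smul_apply, smul_eq_mul, Finset.sum_mul]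
  exact Finset.sum_congr rfl fun i _ => Finset.sum_congr rfl fun j _ => by ring

theorem integrable_iterDirDeriv_two_smul_mul
    (hzz : ∀ i j, Integrable fun z : Fin d → ℝ => z i * z j * φ z)
    (c : ℝ) (g : (Fin d → ℝ) → ℝ) (y : Fin d → ℝ) :
    Integrable fun z => iterDirDeriv (c • z) 2 g y * φ z := by
  rw [iterDirDeriv_two_smul_mul]
  exact integrable_finsetSum _ fun i _ => integrable_finsetSum _ fun j _ => (hzz i j).const_mul _

theorem integral_iterDirDeriv_two_smul_mul
    (hmom2 : ∀ i j, (∫ z, z i * z j * φ z) = if i = j then (1 : ℝ) else 0)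
    (hzz : ∀ i j, Integrable fun z : Fin d → ℝ => z i * z j * φ z)
    (c : ℝ) (g : (Fin d → ℝ) → ℝ) (y : Fin d → ℝ) :
    ∫ z, iterDirDeriv (c • z) 2 g y * φ z = c ^ 2 * lap g y := by
  rw [iterDirDeriv_two_smul_mul, integral_finsetSum _ fun i _ => integrable_finsetSum _ fun j _ =>
    (hzz i j).const_mul _, lap, Finset.mul_sum]
  refine Finset.sum_congr rfl fun i _ => ?_
  rw [integral_finsetSum _ fun j _ => (hzz i j).const_mul _]
  simp [integral_const_mul, hmom2]

end Moments

section Expansions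

variable {d : ℕ} {φ g : (Fin d → ℝ) → ℝ} {M : ℝ}

theorem integral_add_smul_mul_eq_noisyAvg (hφsym : ∀ z, φ (-z) = φ z) (c : ℝ)
    (y : Fin d → ℝ) :
    ∫ z, g (y + c • z) * φ z = noisyAvg φ c g y := by
  rw [noisyAvg, ← integral_neg_eq_self]
  simp [hφsym, sub_eq_add_neg]

theorem integrable_second_difference_mul (hφ : Integrable φ) (hg : Continuous g)
    (hM : ∀ x, |g x| ≤ M) (c : ℝ) (y : Fin d → ℝ) :
    Integrable fun z => (g (y + c • z) + g (y - c • z) - 2 * g y) * φ z := by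
  simp only [add_mul, sub_mul]
  exact ((integrable_comp_mul_of_abs_le hφ hg hM _ (by fun_prop)).add
    (integrable_comp_mul_of_abs_le hφ hg hM _ (by fun_prop))).sub (hφ.const_mul _)

theorem integral_second_difference_mul (hφ : Integrable φ) (hφ1 : ∫ z, φ z = 1)
    (hφsym : ∀ z, φ (-z) = φ z) (hg : Continuous g) (hM : ∀ x, |g x| ≤ M) (c : ℝ)
    (y : Fin d → ℝ) :
    ∫ z, (g (y + c • z) + g (y - c • z) - 2 * g y) * φ z = 2 * (noisyAvg φ c g y - g y) := by
  have hplus := integrable_comp_mul_of_abs_le hφ hg hM (fun z => y + c • z) (by fun_prop)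
  have hminus := integrable_comp_mul_of_abs_le hφ hg hM (fun z => y - c • z) (by fun_prop)
  simp only [add_mul, sub_mul]
  rw [integral_sub (f := fun z => g (y + c • z) * φ z + g (y - c • z) * φ z)
    (hplus.add hminus) (hφ.const_mul _), integral_add hplus hminus,
    integral_const_mul, hφ1, integral_add_smul_mul_eq_noisyAvg hφsym, noisyAvg]
  ring

theorem abs_noisyAvg_sub_le (hφ : Integrable φ) (hφ1 : ∫ z, φ z = 1)
    (hφsym : ∀ z, φ (-z) = φ z)
    (hW2 : Integrable fun z : Fin d → ℝ => (∑ i, |z i|) ^ 2 * φ z)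
    (hg : ContDiff ℝ 2 g) (hM : PartialsBoundedBy 2 M g) {η : ℝ} (hη : 0 ≤ η) (y : Fin d → ℝ) :
    |noisyAvg φ (√(2 * η)) g y - g y| ≤ 2 * M * l1Moment φ 2 * η := by
  set c := √(2 * η)
  have hc0 : 0 ≤ c := Real.sqrt_nonneg _
  have hc : c ^ 2 = 2 * η := Real.sq_sqrt (by positivity)
  have hR : ∀ z, |g (y + c • z) + g (y - c • z) - 2 * g y| ≤ 2 * c ^ 2 * M * (∑ i, |z i|) ^ 2 := by
    intro z
    have h := abs_add_sub_sum_iterDirDeriv_le (c • z) 1 hg hM y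
    simp only [Pi.smul_apply, smul_eq_mul, abs_mul, abs_of_nonneg hc0, ← Finset.mul_sum,
      mul_pow] at h
    norm_num [Finset.sum_range_succ] at h
    linarith
  have h := abs_integral_mul_le_l1Moment hW2 hR
  rw [integral_second_difference_mul hφ hφ1 hφsym hg.continuous hM.abs_le, abs_mul, hc] at h
  norm_num at h
  linarith

theorem abs_noisyAvg_sub_sub_lap_le (hφ : Integrable φ) (hφ1 : ∫ z, φ z = 1)
    (hφsym : ∀ z, φ (-z) = φ z)
    (hmom2 : ∀ i j, (∫ z, z i * z j * φ z) = if i = j then (1 : ℝ) else 0)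
    (hW4 : Integrable fun z : Fin d → ℝ => (∑ i, |z i|) ^ 4 * φ z)
    (hg : ContDiff ℝ 4 g) (hM : PartialsBoundedBy 4 M g) {η : ℝ} (hη : 0 ≤ η) (y : Fin d → ℝ) :
    |noisyAvg φ (√(2 * η)) g y - g y - η * lap g y| ≤ 2 / 3 * M * l1Moment φ 4 * η ^ 2 := by
  set c := √(2 * η)
  have hc0 : 0 ≤ c := Real.sqrt_nonneg _
  have hc : c ^ 2 = 2 * η := Real.sq_sqrt (by positivity)
  have hR : ∀ z, |g (y + c • z) + g (y - c • z) - 2 * g y - iterDirDeriv (c • z) 2 g y|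
      ≤ (c ^ 2) ^ 2 / 3 * M * (∑ i, |z i|) ^ 4 := by
    intro z
    have h := abs_add_sub_sum_iterDirDeriv_le (c • z) 3 hg hM y
    simp only [Pi.smul_apply, smul_eq_mul, abs_mul, abs_of_nonneg hc0, ← Finset.mul_sum,
      mul_pow] at h
    norm_num [Finset.sum_range_succ] at h
    convert h using 2 <;> ring
  have hzz := integrable_mul_mul_of_l1_sq hφ.1 (integrable_l1_pow_mul_of_le hφ hW4 (by norm_num))
  have h := abs_integral_mul_le_l1Moment hW4 hR
  simp only [sub_mul (_ + _ - _)] at h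
  rw [integral_sub (integrable_second_difference_mul hφ hg.continuous hM.abs_le c y)
      (integrable_iterDirDeriv_two_smul_mul hzz c g y),
    integral_second_difference_mul hφ hφ1 hφsym hg.continuous hM.abs_le,
    integral_iterDirDeriv_two_smul_mul hmom2 hzz, hc] at h
  rw [show ∀ a b : ℝ, 2 * a - 2 * η * b = 2 * (a - η * b) by intros; ring, abs_mul] at h
  norm_num at h
  linarith

end Expansions

section Assembly

variable {d : ℕ}

theorem eunorm_le_of_abs_le {v : Fin d → ℝ} {B : ℝ} (h : ∀ i, |v i| ≤ B) : eunorm v ≤ √d * B := by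
  rcases Nat.eq_zero_or_pos d with rfl | hd
  · simp [eunorm]
  have hB : 0 ≤ B := (abs_nonneg _).trans (h ⟨0, hd⟩)
  calc eunorm v ≤ √(d * B ^ 2) := Real.sqrt_le_sqrt <| by
        simpa using Finset.sum_le_card_nsmul Finset.univ (fun i => v i ^ 2) (B ^ 2)
          fun i _ => sq_le_sq' (abs_le.mp (h i)).1 (abs_le.mp (h i)).2
    _ = √d * B := by rw [Real.sqrt_mul (Nat.cast_nonneg d), Real.sqrt_sq hB]

theorem abs_sum_le_of_abs_le {f : Fin d → ℝ} {B : ℝ} (h : ∀ i, |f i| ≤ B) :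
    |∑ i, f i| ≤ d * B :=
  (Finset.abs_sum_le_sum_abs _ _).trans <| by
    simpa using Finset.sum_le_card_nsmul Finset.univ (fun i => |f i|) B fun i _ => h i

theorem l1Moment_nonneg (φ : (Fin d → ℝ) → ℝ) (n : ℕ) : 0 ≤ l1Moment φ n :=
  integral_nonneg fun z => by positivity

variable {φ g : (Fin d → ℝ) → ℝ} {M : ℝ}

theorem lap_noisyAvg (hφ : Integrable φ) (hg : ContDiff ℝ 2 g) (hM : PartialsBoundedBy 2 M g)
    (c : ℝ) : lap (noisyAvg φ c g) = fun y => ∑ i, noisyAvg φ c (pd i (pd i g)) y := by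
  funext y
  refine Finset.sum_congr rfl fun i _ => ?_
  rw [pd_noisyAvg hφ (hg.of_le (by norm_num)) (hM.mono (by norm_num)),
    pd_noisyAvg hφ (hg.pd (n := 1) i) (hM.pd i)]

theorem eunorm_grad_noisyAvg_sub_le {p : (Fin d → ℝ) → ℝ} (hφ : Integrable φ)
    (hφ1 : ∫ z, φ z = 1) (hφsym : ∀ z, φ (-z) = φ z)
    (hmom2 : ∀ i j, (∫ z, z i * z j * φ z) = if i = j then (1 : ℝ) else 0)
    (hW4 : Integrable fun z : Fin d → ℝ => (∑ i, |z i|) ^ 4 * φ z)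
    (hp : ContDiff ℝ 5 p) (hM : PartialsBoundedBy 5 M p) {η : ℝ} (hη : 0 ≤ η) (y : Fin d → ℝ) :
    eunorm (grad (noisyAvg φ (√(2 * η)) p) y - grad p y - η • grad (lap p) y)
      ≤ √d * (2 / 3 * M * l1Moment φ 4 * η ^ 2) := by
  refine eunorm_le_of_abs_le fun i => ?_
  change |pd i (noisyAvg φ _ p) y - pd i p y - η * pd i (lap p) y| ≤ _
  rw [pd_noisyAvg hφ (hp.of_le (by norm_num)) (hM.mono (by norm_num)),
    pd_lap (hp.of_le (by norm_num))]
  exact abs_noisyAvg_sub_sub_lap_le hφ hφ1 hφsym hmom2 hW4 (hp.pd (n := 4) i) (hM.pd i) hη y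

theorem abs_lap_noisyAvg_sub_le {p : (Fin d → ℝ) → ℝ} (hφ : Integrable φ)
    (hφ1 : ∫ z, φ z = 1) (hφsym : ∀ z, φ (-z) = φ z)
    (hmom2 : ∀ i j, (∫ z, z i * z j * φ z) = if i = j then (1 : ℝ) else 0)
    (hW4 : Integrable fun z : Fin d → ℝ => (∑ i, |z i|) ^ 4 * φ z)
    (hp : ContDiff ℝ 6 p) (hM : PartialsBoundedBy 6 M p) {η : ℝ} (hη : 0 ≤ η) (y : Fin d → ℝ) :
    |lap (noisyAvg φ (√(2 * η)) p) y - lap p y - η * lap (lap p) y|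
      ≤ d * (2 / 3 * M * l1Moment φ 4 * η ^ 2) := by
  have hpd2 : ∀ i, ContDiff ℝ 4 (pd i (pd i p)) := fun i => (hp.pd (n := 5) i).pd i
  rw [lap_noisyAvg hφ (hp.of_le (by norm_num)) (hM.mono (by norm_num)),
    show lap (lap p) y = ∑ i, lap (pd i (pd i p)) y from
      lap_fun_sum _ (fun i _ => (hpd2 i).of_le (by norm_num)) y,
    lap, Finset.mul_sum, ← Finset.sum_sub_distrib, ← Finset.sum_sub_distrib]
  exact abs_sum_le_of_abs_le fun i =>
    abs_noisyAvg_sub_sub_lap_le hφ hφ1 hφsym hmom2 hW4 (hpd2 i) ((hM.pd i).pd i) hη y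

theorem eunorm_grad_lap_noisyAvg_sub_le {p : (Fin d → ℝ) → ℝ} (hφ : Integrable φ)
    (hφ1 : ∫ z, φ z = 1) (hφsym : ∀ z, φ (-z) = φ z)
    (hW2 : Integrable fun z : Fin d → ℝ => (∑ i, |z i|) ^ 2 * φ z)
    (hp : ContDiff ℝ 5 p) (hM : PartialsBoundedBy 5 M p) {η : ℝ} (hη : 0 ≤ η) (y : Fin d → ℝ) :
    eunorm (grad (lap (noisyAvg φ (√(2 * η)) p)) y - grad (lap p) y)
      ≤ √d * (d * (2 * M * l1Moment φ 2 * η)) := by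
  have hpd2 : ∀ j, ContDiff ℝ 3 (pd j (pd j p)) := fun j => (hp.pd (n := 4) j).pd j
  refine eunorm_le_of_abs_le fun i => ?_
  change |pd i (lap (noisyAvg φ _ p)) y - pd i (fun x => ∑ j, pd j (pd j p) x) y| ≤ _
  rw [lap_noisyAvg hφ (hp.of_le (by norm_num)) (hM.mono (by norm_num)),
    pd_fun_sum _ _ (fun j _ => (hasFDerivAt_noisyAvg hφ ((hpd2 j).of_le (by norm_num))
      (((hM.pd j).pd j).mono (by norm_num)) _ y).differentiableAt),
    pd_fun_sum _ _ (fun j _ => (hpd2 j).differentiable (by norm_num) y), ← Finset.sum_sub_distrib]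
  refine abs_sum_le_of_abs_le fun j => ?_
  rw [pd_noisyAvg hφ ((hpd2 j).of_le (by norm_num)) (((hM.pd j).pd j).mono (by norm_num))]
  exact abs_noisyAvg_sub_le hφ hφ1 hφsym hW2 ((hpd2 j).pd (n := 2) i) (((hM.pd j).pd j).pd i) hη y

end Assembly

theorem convolution_expansion_derivatives_higher_order_general
    {d : ℕ}
    (p φ : (Fin d → ℝ) → ℝ)
    (hφ1 : (∫ z, φ z) = 1)
    (hφsym : ∀ z, φ (-z) = φ z)
    (hS : SmoothS 6 p)
    (hmom2 : ∀ i j, (∫ z, z i * z j * φ z) = if i = j then (1 : ℝ) else 0)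
    (hmom4 : ∀ i, Integrable fun z => |z i| ^ 4 * φ z)
 :
    ∃ C > (0 : ℝ), ∀ η ∈ Set.Ioo (0 : ℝ) 1, ∀ y : Fin d → ℝ,
      eunorm (grad (fun y' => ∫ z, p (y' - Real.sqrt (2 * η) • z) * φ z) y -
          grad p y - η • grad (fun x => lap p x) y) ≤ C * η ^ 2 ∧
      |lap (fun y' => ∫ z, p (y' - Real.sqrt (2 * η) • z) * φ z) y - lap p y -
          η * lap (fun x => lap p x) y| ≤ C * η ^ 2 ∧
      eunorm (grad (fun x =>
            lap (fun y' => ∫ z, p (y' - Real.sqrt (2 * η) • z) * φ z) x) y -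
          grad (fun x => lap p x) y) ≤ C * η := by
  have hφ : Integrable φ := .of_integral_ne_zero (by rw [hφ1]; exact one_ne_zero)
  have hW4 := integrable_l1_pow_mul_of_abs_pow hφ.1 3 hmom4
  have hW2 := integrable_l1_pow_mul_of_le hφ hW4 (by norm_num : 2 ≤ 4)
  obtain ⟨M, hM⟩ := hS.exists_partialsBoundedBy
  have hp5 : ContDiff ℝ 5 p := hS.1.of_le (by norm_num)
  have hM0 := hM.nonneg
  have hm4 := l1Moment_nonneg φ 4
  have hm2 := l1Moment_nonneg φ 2
  set B := M * (l1Moment φ 4 + 2 * l1Moment φ 2)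
  have hsqrt : √(d : ℝ) ≤ d + 1 := Real.sqrt_le_iff.mpr ⟨by positivity, by nlinarith⟩
  have hC : ∀ {X b t : ℝ}, 0 ≤ X → X ≤ (d + 1) ^ 2 → 0 ≤ b → b ≤ B → 0 ≤ t →
      X * (b * t) ≤ ((d + 1) ^ 2 * B + 1) * t := fun hX0 hX hb0 hb ht => by
    nlinarith [mul_le_mul hX hb hb0 (by positivity)]
  refine ⟨(d + 1) ^ 2 * B + 1, by positivity, fun η hη y => ⟨?_, ?_, ?_⟩⟩
  · exact (eunorm_grad_noisyAvg_sub_le hφ hφ1 hφsym hmom2 hW4 hp5 (hM.mono (by norm_num))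
      hη.1.le y).trans (hC (by positivity) (by nlinarith) (by positivity) (by nlinarith)
      (by positivity))
  · exact (abs_lap_noisyAvg_sub_le hφ hφ1 hφsym hmom2 hW4 hS.1 hM hη.1.le y).trans
      (hC (by positivity) (by nlinarith) (by positivity) (by nlinarith) (by positivity))
  · refine (eunorm_grad_lap_noisyAvg_sub_le hφ hφ1 hφsym hW2 hp5 (hM.mono (by norm_num))
      hη.1.le y).trans ?_
    rw [← mul_assoc]
    exact hC (by positivity) (by nlinarith [Real.sqrt_nonneg (d : ℝ)]) (by positivity)
      (by nlinarith) hη.1.le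

/-- Higher-order expansion of the derivatives of the noisy density
`q_η(y) = ∫ p(y - √(2η) z) φ(z) dz`:
`‖∇q_η - ∇p - η ∇Δp‖ ≤ C η²`, `|Δq_η - Δp - η Δ²p| ≤ C η²`, and
`‖∇Δq_η - ∇Δp‖ ≤ C η`, uniformly in `y`. -/
theorem convolution_expansion_derivatives_higher_order
    {d : ℕ} (hd : 0 < d)
    (p φ : (Fin d → ℝ) → ℝ)
    (hp0 : ∀ x, 0 ≤ p x) (hp1 : (∫ x, p x) = 1)
    (hφ0 : ∀ z, 0 ≤ φ z) (hφ1 : (∫ z, φ z) = 1)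
    (hφsym : ∀ z, φ (-z) = φ z)
    (hS : SmoothS 6 p)
    (hmom2 : ∀ i j, (∫ z, z i * z j * φ z) = if i = j then (1 : ℝ) else 0)
    (hmom4 : ∀ i, Integrable fun z => |z i| ^ 4 * φ z)
    (hmom4th : ∀ i j k l, (∫ z, z i * z j * z k * z l * φ z) =
      (if i = j then (1 : ℝ) else 0) * (if k = l then (1 : ℝ) else 0) +
        (if i = k then (1 : ℝ) else 0) * (if j = l then (1 : ℝ) else 0) +
        (if i = l then (1 : ℝ) else 0) * (if j = k then (1 : ℝ) else 0))
    (hmom6 : ∀ i, Integrable fun z => |z i| ^ 6 * φ z)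
 :
    ∃ C > (0 : ℝ), ∀ η ∈ Set.Ioo (0 : ℝ) 1, ∀ y : Fin d → ℝ,
      eunorm (grad (fun y' => ∫ z, p (y' - Real.sqrt (2 * η) • z) * φ z) y -
          grad p y - η • grad (fun x => lap p x) y) ≤ C * η ^ 2 ∧
      |lap (fun y' => ∫ z, p (y' - Real.sqrt (2 * η) • z) * φ z) y - lap p y -
          η * lap (fun x => lap p x) y| ≤ C * η ^ 2 ∧
      eunorm (grad (fun x =>
            lap (fun y' => ∫ z, p (y' - Real.sqrt (2 * η) • z) * φ z) x) y -
          grad (fun x => lap p x) y) ≤ C * η :=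
  convolution_expansion_derivatives_higher_order_general p φ hφ1 hφsym hS hmom2 hmom4
end
end
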